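/- For every integer L ≥ 2 and every matrix M ∈ ℝ^{K×d}, Φ_2(M)^{2/L} ≤ Φ_L(M) ≤ rank(M)^{(L-2)/L} · Φ_2(M)^{2/L}. -/

import Mathlib

open Matrix

/-- The singular values of a real `K × d` matrix `M`, given (in some order, with
multiplicity, padded with zeros up to `d` values) as the square roots of the
eigenvalues of `Mᴴ M`. -/
noncomputable def matSingVal {K d : ℕ} (M : Matrix (Fin K) (Fin d) ℝ) (j : Fin d) : ℝ :=
  Real.sqrt ((Matrix.isHermitian_conjTranspose_mul_self M).eigenvalues j)

/-- `‖M‖_{S^q}^q = Σ_k σ_k(M)^q`, the `q`-th power of the Schatten-`q` quasi-norm. -/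
noncomputable def schattenPow {K d : ℕ} (M : Matrix (Fin K) (Fin d) ℝ) (q : ℝ) : ℝ :=
  ∑ j, matSingVal M j ^ q

/-- The Schatten-`q` quasi-norm `‖M‖_{S^q} = (Σ_k σ_k(M)^q)^{1/q}`. -/
noncomputable def schattenNorm {K d : ℕ} (M : Matrix (Fin K) (Fin d) ℝ) (q : ℝ) : ℝ :=
  schattenPow M q ^ (1 / q)

/-- `Φ_L(M) = inf { ‖D_λ⁻¹ M‖_{S^{2/(L-1)}}^{2/L} : λ ∈ ℝ^K, λ > 0, ‖λ‖₂ = 1 }`. -/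
noncomputable def Phi (L : ℕ) {K d : ℕ} (M : Matrix (Fin K) (Fin d) ℝ) : ℝ :=
  sInf { r | ∃ l : Fin K → ℝ, (∀ k, 0 < l k) ∧ (∑ k, l k ^ 2) = 1 ∧
    r = schattenNorm (Matrix.diagonal (fun k => (l k)⁻¹) * M) (2 / ((L : ℝ) - 1)) ^ ((2 : ℝ) / L) }

/-! With `p = L - 1 ≥ 1` and `x_j = σ_j^{2/p}` for the singular values `σ_j` of `D_λ⁻¹ M`,
superadditivity of `t ↦ t^p` gives `∑ x_j^p ≤ (∑ x_j)^p`, and the power-mean inequality over the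
`rank M` nonzero singular values gives `(∑ x_j)^p ≤ (rank M)^{p-1} ∑ x_j^p`. Taking `1/L`-th powers
bounds `‖D_λ⁻¹ M‖_{S^{2/p}}^{2/L}` on both sides by `‖D_λ⁻¹ M‖_F^{2/L}`, for every `λ`; the infimum
over `λ` commutes with the monotone continuous map `t ↦ t^{2/L}`. -/

open Finset Filter Topology

theorem Real.sum_rpow_le_rpow_sum_of_nonneg {ι : Type*} (s : Finset ι) {f : ι → ℝ}
    (hf : ∀ i ∈ s, 0 ≤ f i) {p : ℝ} (hp : 1 ≤ p) :
    ∑ i ∈ s, f i ^ p ≤ (∑ i ∈ s, f i) ^ p := by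
  induction s using Finset.cons_induction with
  | empty => simp [Real.zero_rpow (by linarith : p ≠ 0)]
  | cons a s _ ih =>
    rw [sum_cons, sum_cons]
    have hs := fun i hi => hf i (mem_cons_of_mem hi)
    calc f a ^ p + ∑ i ∈ s, f i ^ p ≤ f a ^ p + (∑ i ∈ s, f i) ^ p := by gcongr; exact ih hs
      _ ≤ (f a + ∑ i ∈ s, f i) ^ p :=
        Real.add_rpow_le_rpow_add (hf a (mem_cons_self a s)) (sum_nonneg hs) hp

section Schatten

variable {K d : ℕ}

lemma matSingVal_nonneg (A : Matrix (Fin K) (Fin d) ℝ) (j : Fin d) : 0 ≤ matSingVal A j :=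
  Real.sqrt_nonneg _

lemma card_matSingVal_ne_zero (A : Matrix (Fin K) (Fin d) ℝ) :
    #{j | matSingVal A j ≠ 0} = A.rank := by
  classical
  rw [← rank_conjTranspose_mul_self,
    (isHermitian_conjTranspose_mul_self A).rank_eq_card_non_zero_eigs, Fintype.card_subtype]
  refine congrArg card (filter_congr fun j _ => ?_)
  rw [matSingVal, Real.sqrt_ne_zero', (eigenvalues_conjTranspose_mul_self_nonneg A j).lt_iff_ne']

lemma schattenPow_nonneg (A : Matrix (Fin K) (Fin d) ℝ) (q : ℝ) : 0 ≤ schattenPow A q :=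
  sum_nonneg fun j _ => Real.rpow_nonneg (matSingVal_nonneg A j) q

lemma schattenNorm_nonneg (A : Matrix (Fin K) (Fin d) ℝ) (q : ℝ) : 0 ≤ schattenNorm A q :=
  Real.rpow_nonneg (schattenPow_nonneg A q) _

lemma schattenNorm_rpow (A : Matrix (Fin K) (Fin d) ℝ) (q r : ℝ) :
    schattenNorm A q ^ r = schattenPow A q ^ (r / q) := by
  rw [schattenNorm, ← Real.rpow_mul (schattenPow_nonneg A q), one_div_mul_eq_div]

lemma schattenPow_two_le_rpow (A : Matrix (Fin K) (Fin d) ℝ) {p : ℝ} (hp : 1 ≤ p) :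
    schattenPow A 2 ≤ schattenPow A (2 / p) ^ p := by
  calc schattenPow A 2 = ∑ j, (matSingVal A j ^ (2 / p)) ^ p := by
        simp only [schattenPow, ← Real.rpow_mul (matSingVal_nonneg A _),
          div_mul_cancel₀ _ (by positivity : p ≠ 0)]
    _ ≤ schattenPow A (2 / p) ^ p :=
        Real.sum_rpow_le_rpow_sum_of_nonneg _
          (fun j _ => Real.rpow_nonneg (matSingVal_nonneg A j) _) hp

lemma rpow_schattenPow_le (A : Matrix (Fin K) (Fin d) ℝ) {p : ℝ} (hp : 1 ≤ p) :
    schattenPow A (2 / p) ^ p ≤ (A.rank : ℝ) ^ (p - 1) * schattenPow A 2 := by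
  have hp0 : p ≠ 0 := by positivity
  have hσ := matSingVal_nonneg A
  have hsupp (q : ℝ) (hq : q ≠ 0) :
      ∑ j with matSingVal A j ≠ 0, matSingVal A j ^ q = schattenPow A q :=
    sum_filter_of_ne fun j _ h hj => h (by rw [hj, Real.zero_rpow hq])
  calc schattenPow A (2 / p) ^ p
      = (∑ j with matSingVal A j ≠ 0, matSingVal A j ^ (2 / p)) ^ p := by
        rw [hsupp _ (by positivity)]
    _ ≤ (A.rank : ℝ) ^ (p - 1) * ∑ j with matSingVal A j ≠ 0, (matSingVal A j ^ (2 / p)) ^ p := by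
        rw [← card_matSingVal_ne_zero]
        exact Real.rpow_sum_le_const_mul_sum_rpow_of_nonneg _ hp
          fun j _ => Real.rpow_nonneg (hσ j) _
    _ = (A.rank : ℝ) ^ (p - 1) * schattenPow A 2 := by
        simp only [← Real.rpow_mul (hσ _), div_mul_cancel₀ _ hp0, hsupp 2 two_ne_zero]

lemma schattenNorm_two_rpow (A : Matrix (Fin K) (Fin d) ℝ) (L : ℝ) :
    schattenNorm A 2 ^ (2 / L) = schattenPow A 2 ^ (1 / L) := by
  rw [schattenNorm_rpow, div_right_comm, div_self two_ne_zero]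

lemma schattenNorm_rpow_eq_rpow_schattenPow (A : Matrix (Fin K) (Fin d) ℝ) {L : ℝ} (hL : 1 < L) :
    schattenNorm A (2 / (L - 1)) ^ (2 / L) =
      (schattenPow A (2 / (L - 1)) ^ (L - 1)) ^ (1 / L) := by
  have : L - 1 ≠ 0 := by linarith
  rw [schattenNorm_rpow, ← Real.rpow_mul (schattenPow_nonneg A _)]
  field_simp

lemma schattenNorm_two_rpow_le (A : Matrix (Fin K) (Fin d) ℝ) {L : ℝ} (hL : 2 ≤ L) :
    schattenNorm A 2 ^ (2 / L) ≤ schattenNorm A (2 / (L - 1)) ^ (2 / L) := by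
  rw [schattenNorm_two_rpow, schattenNorm_rpow_eq_rpow_schattenPow A (by linarith)]
  have : 0 < L := by linarith
  gcongr
  · exact schattenPow_nonneg A 2
  · exact schattenPow_two_le_rpow A (by linarith)

lemma schattenNorm_rpow_le_rank_rpow_mul (A : Matrix (Fin K) (Fin d) ℝ) {L : ℝ} (hL : 2 ≤ L) :
    schattenNorm A (2 / (L - 1)) ^ (2 / L) ≤
      (A.rank : ℝ) ^ ((L - 2) / L) * schattenNorm A 2 ^ (2 / L) := by
  have hL0 : 0 < L := by linarith
  have hrank : (0 : ℝ) ≤ A.rank := Nat.cast_nonneg _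
  calc schattenNorm A (2 / (L - 1)) ^ (2 / L)
      = (schattenPow A (2 / (L - 1)) ^ (L - 1)) ^ (1 / L) :=
        schattenNorm_rpow_eq_rpow_schattenPow A (by linarith)
    _ ≤ ((A.rank : ℝ) ^ (L - 1 - 1) * schattenPow A 2) ^ (1 / L) := by
        gcongr
        · exact Real.rpow_nonneg (schattenPow_nonneg A _) _
        · exact rpow_schattenPow_le A (by linarith)
    _ = (A.rank : ℝ) ^ ((L - 2) / L) * schattenNorm A 2 ^ (2 / L) := by
        rw [Real.mul_rpow (Real.rpow_nonneg hrank _) (schattenPow_nonneg A 2),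
          ← Real.rpow_mul hrank, schattenNorm_two_rpow]
        ring_nf

end Schatten

section sInfImage

variable {α : Type*} {s : Set α} {f g : α → ℝ} {p : ℝ}

lemma Real.rpow_sInf_image_le (hf : ∀ x ∈ s, 0 ≤ f x) (hp : 0 < p)
    (hfg : ∀ x ∈ s, f x ^ p ≤ g x) : sInf (f '' s) ^ p ≤ sInf (g '' s) := by
  rcases s.eq_empty_or_nonempty with rfl | hs
  · simp [Real.zero_rpow hp.ne']
  have hbdd : BddBelow (f '' s) := ⟨0, Set.forall_mem_image.2 hf⟩
  refine le_csInf (hs.image g) (Set.forall_mem_image.2 fun x hx => le_trans ?_ (hfg x hx))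
  exact Real.rpow_le_rpow (Real.sInf_nonneg (Set.forall_mem_image.2 hf))
    (csInf_le hbdd (Set.mem_image_of_mem f hx)) hp.le

lemma Real.sInf_image_le_mul_rpow (hf : ∀ x ∈ s, 0 ≤ f x) (hg : ∀ x ∈ s, 0 ≤ g x) (hp : 0 < p)
    {c : ℝ} (hgf : ∀ x ∈ s, g x ≤ c * f x ^ p) : sInf (g '' s) ≤ c * sInf (f '' s) ^ p := by
  rcases s.eq_empty_or_nonempty with rfl | hs
  · simp [Real.zero_rpow hp.ne']
  obtain ⟨u, -, hu, hus⟩ := exists_seq_tendsto_sInf (hs.image f) ⟨0, Set.forall_mem_image.2 hf⟩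
  have hcont : Tendsto (fun n => c * u n ^ p) atTop (𝓝 (c * sInf (f '' s) ^ p)) :=
    (hu.rpow_const (Or.inr hp.le)).const_mul c
  refine ge_of_tendsto' hcont fun n => ?_
  obtain ⟨x, hx, hxu⟩ := hus n
  rw [← hxu]
  exact (csInf_le ⟨0, Set.forall_mem_image.2 hg⟩ (Set.mem_image_of_mem g hx)).trans (hgf x hx)

end sInfImage

def posUnitSphere (K : ℕ) : Set (Fin K → ℝ) := {l | (∀ k, 0 < l k) ∧ ∑ k, l k ^ 2 = 1}

lemma Phi_eq_sInf_image (L : ℕ) {K d : ℕ} (M : Matrix (Fin K) (Fin d) ℝ) :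
    Phi L M = sInf ((fun l => schattenNorm (diagonal (fun k => (l k)⁻¹) * M) (2 / ((L : ℝ) - 1)) ^
      ((2 : ℝ) / L)) '' posUnitSphere K) := by
  simp only [Phi, Set.image, posUnitSphere, Set.mem_ofPred_eq, and_assoc, eq_comm]

lemma Phi_two_eq_sInf_image {K d : ℕ} (M : Matrix (Fin K) (Fin d) ℝ) :
    Phi 2 M =
      sInf ((fun l => schattenNorm (diagonal (fun k => (l k)⁻¹) * M) 2) '' posUnitSphere K) := by
  rw [Phi_eq_sInf_image]
  norm_num

lemma rank_diagonal_inv_mul {K d : ℕ} (M : Matrix (Fin K) (Fin d) ℝ) {l : Fin K → ℝ}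
    (hl : ∀ k, l k ≠ 0) : (diagonal (fun k => (l k)⁻¹) * M).rank = M.rank :=
  rank_mul_eq_right_of_isUnit_det _ _ <| by
    simpa [det_diagonal, Finset.prod_ne_zero_iff] using hl

/-- `Φ_2(M)^{2/L} ≤ Φ_L(M) ≤ rank(M)^{(L-2)/L} · Φ_2(M)^{2/L}`. -/
theorem Phi_sandwich {K d : ℕ} (L : ℕ) (hL : 2 ≤ L) (M : Matrix (Fin K) (Fin d) ℝ) :
    Phi 2 M ^ ((2 : ℝ) / L) ≤ Phi L M ∧
      Phi L M ≤ (M.rank : ℝ) ^ (((L : ℝ) - 2) / L) * Phi 2 M ^ ((2 : ℝ) / L) := by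
  have hL' : (2 : ℝ) ≤ L := by exact_mod_cast hL
  have hp : (0 : ℝ) < 2 / L := by positivity
  rw [Phi_two_eq_sInf_image, Phi_eq_sInf_image L]
  constructor
  · exact Real.rpow_sInf_image_le (fun _ _ => schattenNorm_nonneg _ _) hp
      fun _ _ => schattenNorm_two_rpow_le _ hL'
  · refine Real.sInf_image_le_mul_rpow (fun _ _ => schattenNorm_nonneg _ _)
      (fun _ _ => Real.rpow_nonneg (schattenNorm_nonneg _ _) _) hp fun l hl => ?_
    rw [← rank_diagonal_inv_mul M fun k => (hl.1 k).ne']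
    exact schattenNorm_rpow_le_rank_rpow_mul _ hL'
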